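/- In a β-safe round-robin bidding dynamic with α-aggressive bid updates (0 < α ≤ 1 ≤ β), the average social welfare over the first T steps satisfies (1/T)·sum_{t=1}^T SW(b^t) ≥ (α/((2α+1)β))·(1 − n/T)·OPT(v). -/
import Mathlib


open Finset

/-- Maximum bid on item `j` among bidders other than `i` (bids assumed nonnegative). -/
noncomputable def maxOther {n m : ℕ} (b : Fin n → Fin m → ℝ) (i : Fin n) (j : Fin m) : ℝ :=
  (((Finset.univ.erase i).sup fun k => Real.toNNReal (b k j)) : NNReal)

lemma mo_nonneg {n m : ℕ} (b : Fin n → Fin m → ℝ) (i : Fin n) (j : Fin m) :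
    0 ≤ maxOther b i j := NNReal.coe_nonneg _

lemma mo_le {n m : ℕ} {b : Fin n → Fin m → ℝ} {i : Fin n} {j : Fin m} {c : ℝ}
    (hc : 0 ≤ c) (h : ∀ k, k ≠ i → b k j ≤ c) : maxOther b i j ≤ c := by
  rw [maxOther, ← Real.coe_toNNReal c hc, NNReal.coe_le_coe]
  exact Finset.sup_le fun k hk => Real.toNNReal_le_toNNReal (h k (Finset.ne_of_mem_erase hk))

lemma le_mo {n m : ℕ} {b : Fin n → Fin m → ℝ} {i k : Fin n} {j : Fin m}
    (hk : k ≠ i) : b k j ≤ maxOther b i j :=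
  (Real.le_coe_toNNReal _).trans (NNReal.coe_le_coe.2
    (Finset.le_sup (f := fun k => Real.toNNReal (b k j)) (Finset.mem_erase.2 ⟨hk, Finset.mem_univ _⟩)))

lemma persist {n m : ℕ} (hn : 0 < n) (b : ℕ → Fin n → Fin m → ℝ)
    (hupd : ∀ t : ℕ, ∀ k : Fin n, k ≠ ⟨t % n, Nat.mod_lt t hn⟩ → ∀ j, b t k j = b (t + 1) k j)
    (k : Fin n) (a : ℕ) (j : Fin m) :
    ∀ c, a ≤ c → (∀ τ, a ≤ τ → τ < c → τ % n ≠ (k : ℕ)) → b a k j = b c k j := by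
  intro c hac
  induction c, hac using Nat.le_induction with
  | base => intro _; rfl
  | succ c hc ih =>
    intro h
    rw [ih (fun τ h1 h2 => h τ h1 (by omega))]
    exact hupd c k (fun he => h c hc (by omega) (congrArg Fin.val he).symm) j

lemma aux_part {n m : ℕ} (Q : Fin n → Finset (Fin m)) (w : Fin m → Fin n)
    (hw : ∀ j, j ∈ Q (w j)) (hu : ∀ j x, j ∈ Q x → x = w j) (F : Fin n → Fin m → ℝ) :
    ∑ x, ∑ j ∈ Q x, F x j = ∑ j, F (w j) j := by
  calc ∑ x, ∑ j ∈ Q x, F x j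
      = ∑ x, ∑ j : Fin m, if j ∈ Q x then F x j else 0 := by
        refine Finset.sum_congr rfl fun x _ => ?_
        rw [Finset.sum_ite_mem, Finset.univ_inter]
    _ = ∑ j : Fin m, ∑ x, if j ∈ Q x then F x j else 0 := Finset.sum_comm
    _ = ∑ j, F (w j) j := by
        refine Finset.sum_congr rfl fun j _ => ?_
        refine (Finset.sum_eq_single (w j) (fun x _ hne => if_neg (fun hmem => hne (hu j x hmem)))
          (fun hmem => absurd (Finset.mem_univ _) hmem)).trans (if_pos (hw j))

lemma aux_swap {m : ℕ} (s : Finset ℕ) (A : ℕ → Finset (Fin m)) (G : ℕ → Fin m → ℝ) :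
    ∑ r ∈ s, ∑ j ∈ A r, G r j = ∑ j : Fin m, ∑ r ∈ s.filter (fun r => j ∈ A r), G r j := by
  calc ∑ r ∈ s, ∑ j ∈ A r, G r j
      = ∑ r ∈ s, ∑ j : Fin m, if j ∈ A r then G r j else 0 := by
        refine Finset.sum_congr rfl fun r _ => ?_
        rw [Finset.sum_ite_mem, Finset.univ_inter]
    _ = ∑ j : Fin m, ∑ r ∈ s, if j ∈ A r then G r j else 0 := Finset.sum_comm
    _ = _ := by
        refine Finset.sum_congr rfl fun j _ => ?_
        rw [Finset.sum_filter]

/-- Average welfare guarantee: in a `β`-safe round-robin bidding dynamic with `α`-aggressive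
bid updates, the average social welfare over the first `T` steps is at least
`(α/((2α+1)·β))·(1 − n/T)` times the optimal welfare. -/
theorem stmt5 (n m : ℕ) (hn : 0 < n) (α β : ℝ) (hα : 0 < α) (hα1 : α ≤ 1) (hβ : 1 ≤ β)
    (v : Fin n → Finset (Fin m) → ℝ) (hv : ∀ i S, 0 ≤ v i S)
    (b : ℕ → Fin n → Fin m → ℝ)
    (hnonneg : ∀ t i j, 0 ≤ b t i j)
    -- round-robin activation: at step `t+1` only bidder `t % n` changes his bid
    (hupd : ∀ t : ℕ, ∀ k : Fin n, k ≠ ⟨t % n, Nat.mod_lt t hn⟩ → ∀ j, b t k j = b (t + 1) k j)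
    -- `T t i` is the set of items won by bidder `i` at profile `b^t`
    (T : ℕ → Fin n → Finset (Fin m))
    (hpart : ∀ t, ∀ j : Fin m, ∃! i : Fin n, j ∈ T t i)
    (hwin : ∀ t, ∀ i : Fin n, ∀ j ∈ T t i, ∀ k : Fin n, b t k j ≤ b t i j)
    -- β-safety at every step
    (hsafe : ∀ t, ∀ i : Fin n,
      ∑ j ∈ T t i, (b t i j - maxOther (b t) i j)
        ≤ β * (v i (T t i) - ∑ j ∈ T t i, maxOther (b t) i j))
    -- each update is α-aggressive
    (haggr : ∀ t : ℕ, ∀ S : Finset (Fin m),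
      let i : Fin n := ⟨t % n, Nat.mod_lt t hn⟩
      α * (v i S - ∑ j ∈ S, maxOther (b (t + 1)) i j)
        ≤ ∑ j ∈ T (t + 1) i, (b (t + 1) i j - maxOther (b (t + 1)) i j)) :
    ∀ Tfin : ℕ, 0 < Tfin → ∀ Sstar : Fin n → Finset (Fin m),
      (∀ j : Fin m, ∃! i : Fin n, j ∈ Sstar i) →
      (α / ((2 * α + 1) * β)) * (1 - (n : ℝ) / Tfin) * ∑ i, v i (Sstar i)
        ≤ (1 / (Tfin : ℝ)) * ∑ t ∈ Finset.Icc 1 Tfin, ∑ i, v i (T t i) := by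
  intro Tfin hTfin Sstar hSstar
  -- basic objects
  have hmod : ∀ a c : ℕ, a < c → c < a + n → ¬ (a % n = c % n) := by
    intro a c h1 h2 h
    have hd := (Nat.modEq_iff_dvd' h1.le).mp h
    have := Nat.le_of_dvd (by omega) hd
    omega
  set DW : ℕ → ℝ := fun τ => ∑ i, ∑ j ∈ T τ i, b τ i j with hDWdef
  set SW : ℕ → ℝ := fun τ => ∑ i, v i (T τ i) with hSWdef
  have hw : ∀ τ j, j ∈ T τ ((hpart τ j).choose) := fun τ j => (hpart τ j).choose_spec.1
  have hwu : ∀ τ j x, j ∈ T τ x → x = (hpart τ j).choose :=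
    fun τ j x hx => (hpart τ j).choose_spec.2 x hx
  set p : ℕ → Fin m → ℝ := fun τ j => b τ ((hpart τ j).choose) j with hpdef
  have hple : ∀ τ (k : Fin n) j, b τ k j ≤ p τ j := fun τ k j => hwin τ _ j (hw τ j) k
  have hppos : ∀ τ j, 0 ≤ p τ j := fun τ j => hnonneg _ _ _
  have hDWp : ∀ τ, DW τ = ∑ j, p τ j := fun τ =>
    aux_part (T τ) (fun j => (hpart τ j).choose) (hw τ) (hwu τ) (fun i j => b τ i j)
  have hSW0 : ∀ τ, 0 ≤ SW τ := fun τ => Finset.sum_nonneg fun i _ => hv i _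
  have hDWSW : ∀ τ, DW τ ≤ β * SW τ := by
    intro τ
    rw [hDWdef, hSWdef]
    simp only
    rw [Finset.mul_sum]
    refine Finset.sum_le_sum fun i _ => ?_
    have h1 := hsafe τ i
    have h2 : (0:ℝ) ≤ ∑ j ∈ T τ i, maxOther (b τ) i j :=
      Finset.sum_nonneg fun j _ => mo_nonneg _ _ _
    rw [Finset.sum_sub_distrib] at h1
    nlinarith [mul_nonneg (by linarith : (0:ℝ) ≤ β - 1) h2]
  -- the winner of Sstar
  have hws : ∀ j, j ∈ Sstar ((hSstar j).choose) := fun j => (hSstar j).choose_spec.1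
  have hwsu : ∀ j x, j ∈ Sstar x → x = (hSstar j).choose :=
    fun j x hx => (hSstar j).choose_spec.2 x hx
  set OPT : ℝ := ∑ i, v i (Sstar i) with hOPTdef
  have hOPT0 : 0 ≤ OPT := Finset.sum_nonneg fun i _ => hv i _
  -- pointwise welfare lemma
  have key : ∀ t0 : ℕ, α * OPT ≤ (α + 1) * DW (t0 + n) + α * DW t0 := by
    intro t0
    set I : ℕ → Fin n := fun r => ⟨(t0 + r) % n, Nat.mod_lt _ hn⟩ with hIdef
    have hIval : ∀ r, (I r : ℕ) = (t0 + r) % n := fun r => rfl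
    have hIinj : ∀ r ∈ Finset.range n, ∀ r' ∈ Finset.range n, I r = I r' → r = r' := by
      intro r hr r' hr' h
      simp only [Finset.mem_range] at hr hr'
      have h2 : (t0 + r) % n = (t0 + r') % n := congrArg Fin.val h
      rcases lt_trichotomy r r' with hlt | he | hlt
      · exact absurd h2 (hmod _ _ (by omega) (by omega))
      · exact he
      · exact absurd h2.symm (hmod _ _ (by omega) (by omega))
    have hIsurj : ∀ x : Fin n, ∃ r ∈ Finset.range n, I r = x := by
      intro x
      refine ⟨((x : ℕ) + n - t0 % n) % n, Finset.mem_range.2 (Nat.mod_lt _ hn), ?_⟩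
      apply Fin.ext
      show (t0 + ((x : ℕ) + n - t0 % n) % n) % n = (x : ℕ)
      rw [Nat.add_mod_mod]
      have h1 : t0 + ((x : ℕ) + n - t0 % n) = (x : ℕ) + n + n * (t0 / n) := by
        have hdm : n * (t0 / n) + t0 % n = t0 := Nat.div_add_mod t0 n
        have hq : t0 % n < n := Nat.mod_lt _ hn
        omega
      rw [h1, Nat.add_mul_mod_self_left, Nat.add_mod_right, Nat.mod_eq_of_lt x.isLt]
    -- persistence helpers
    have hafter : ∀ r s : ℕ, r < s → s ≤ n → ∀ j, b (t0 + r + 1) (I r) j = b (t0 + s) (I r) j := by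
      intro r s hrs hsn j
      refine persist hn b hupd (I r) (t0 + r + 1) j (t0 + s) (by omega) ?_
      intro τ h1 h2 h3
      exact hmod (t0 + r) τ (by omega) (by omega) (h3.symm ▸ rfl)
    have hsplit : ∀ r, r < n → ∀ k : Fin n, ∀ j,
        b (t0 + r + 1) k j = b t0 k j ∨ b (t0 + r + 1) k j = b (t0 + n) k j := by
      intro r hr k j
      by_cases hcase : ∃ τ, t0 ≤ τ ∧ τ < t0 + r + 1 ∧ τ % n = (k : ℕ)
      · right
        obtain ⟨τ, h1, h2, h3⟩ := hcase
        refine persist hn b hupd k (t0 + r + 1) j (t0 + n) (by omega) ?_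
        intro τ' h1' h2' h3'
        exact hmod τ τ' (by omega) (by omega) (h3.trans h3'.symm)
      · left
        push_neg at hcase
        exact (persist hn b hupd k t0 j (t0 + r + 1) (by omega)
          (fun τ ha hb => hcase τ ha hb)).symm
    have hfix : ∀ r, r < n → ∀ j, b (t0 + r + 1) (I r) j = b (t0 + n) (I r) j :=
      fun r hr j => hafter r n hr le_rfl j
    -- bound (a): prices in optimal bundles
    have hamo : ∀ r, r < n → ∀ j, maxOther (b (t0 + r + 1)) (I r) j ≤ p t0 j + p (t0 + n) j := by
      intro r hr j
      refine mo_le (add_nonneg (hppos _ _) (hppos _ _)) (fun k hk => ?_)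
      rcases hsplit r hr k j with h | h
      · rw [h]; have := hple t0 k j; have := hppos (t0 + n) j; linarith
      · rw [h]; have := hple (t0 + n) k j; have := hppos t0 j; linarith
    -- telescoping bound (b)
    have tele : ∀ j : Fin m, ∀ R : Finset ℕ, R ⊆ Finset.range n →
        (∀ r ∈ R, j ∈ T (t0 + r + 1) (I r)) →
        ∑ r ∈ R, (b (t0 + r + 1) (I r) j - maxOther (b (t0 + r + 1)) (I r) j)
          ≤ ((R.sup fun r => Real.toNNReal (b (t0 + n) (I r) j) : NNReal) : ℝ) := by
      intro j R
      induction R using Finset.strongInduction with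
      | _ R ih =>
        intro hsub hmem
        rcases R.eq_empty_or_nonempty with rfl | hne
        · simp
        · have hrmem : R.max' hne ∈ R := R.max'_mem hne
          set rmax := R.max' hne with hrmaxdef
          have hrn : rmax < n := Finset.mem_range.1 (hsub hrmem)
          have hsum : ∑ r ∈ R, (b (t0 + r + 1) (I r) j - maxOther (b (t0 + r + 1)) (I r) j)
              = (∑ r ∈ R.erase rmax, (b (t0 + r + 1) (I r) j - maxOther (b (t0 + r + 1)) (I r) j))
                + (b (t0 + rmax + 1) (I rmax) j - maxOther (b (t0 + rmax + 1)) (I rmax) j) :=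
            (Finset.sum_erase_add _ _ hrmem).symm
          have h1 := ih (R.erase rmax) (Finset.erase_ssubset hrmem)
            ((Finset.erase_subset _ _).trans hsub)
            (fun r hr => hmem r (Finset.mem_of_mem_erase hr))
          have hgmax : b (t0 + rmax + 1) (I rmax) j = b (t0 + n) (I rmax) j := hfix rmax hrn j
          have hsupR : b (t0 + n) (I rmax) j
              ≤ ((R.sup fun r => Real.toNNReal (b (t0 + n) (I r) j) : NNReal) : ℝ) :=
            (Real.le_coe_toNNReal _).trans (NNReal.coe_le_coe.2
              (Finset.le_sup (f := fun r => Real.toNNReal (b (t0 + n) (I r) j)) hrmem))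
          rcases (R.erase rmax).eq_empty_or_nonempty with he | hne'
          · rw [hsum, he]
            simp only [Finset.sum_empty, zero_add]
            have := mo_nonneg (b (t0 + rmax + 1)) (I rmax) j
            linarith
          · have hex : ∃ r2 ∈ R.erase rmax,
                ((R.erase rmax).sup fun r => Real.toNNReal (b (t0 + n) (I r) j))
                  = Real.toNNReal (b (t0 + n) (I r2) j) :=
              Finset.exists_mem_eq_sup _ hne' _
            obtain ⟨r2, hr2mem, hsup2⟩ := hex
            have hr2R : r2 ∈ R := Finset.mem_of_mem_erase hr2mem
            have hr2lt : r2 < rmax :=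
              lt_of_le_of_ne (Finset.le_max' R r2 hr2R) (Finset.ne_of_mem_erase hr2mem)
            have hr2n : r2 < n := Finset.mem_range.1 (hsub hr2R)
            have hsup2' : (((R.erase rmax).sup (fun r => Real.toNNReal (b (t0 + n) (I r) j)) : NNReal) : ℝ)
                = b (t0 + n) (I r2) j := by
              rw [hsup2]; exact Real.coe_toNNReal _ (hnonneg _ _ _)
            have hbid2 : b (t0 + rmax + 1) (I r2) j = b (t0 + n) (I r2) j :=
              (hafter r2 (rmax + 1) (by omega) (by omega) j).symm.trans
                (hafter r2 n hr2n le_rfl j)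
            have hIne : I r2 ≠ I rmax := fun he' =>
              absurd (hIinj r2 (Finset.mem_range.2 hr2n) rmax (Finset.mem_range.2 hrn) he')
                (by omega)
            have hmole : b (t0 + n) (I r2) j ≤ maxOther (b (t0 + rmax + 1)) (I rmax) j := by
              rw [← hbid2]; exact le_mo hIne
            rw [hsum]
            rw [hsup2'] at h1
            linarith
    -- bound (b)
    have hb : ∑ r ∈ Finset.range n, ∑ j ∈ T (t0 + r + 1) (I r),
        (b (t0 + r + 1) (I r) j - maxOther (b (t0 + r + 1)) (I r) j) ≤ ∑ j, p (t0 + n) j := by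
      rw [aux_swap]
      refine Finset.sum_le_sum fun j _ => ?_
      refine (tele j _ (Finset.filter_subset _ _)
        (fun r hr => (Finset.mem_filter.mp hr).2)).trans ?_
      rw [← Real.coe_toNNReal (p (t0 + n) j) (hppos _ _), NNReal.coe_le_coe]
      exact Finset.sup_le fun r hr => Real.toNNReal_le_toNNReal (hple (t0 + n) (I r) j)
    -- bound (a) summed
    have ha : ∑ r ∈ Finset.range n, ∑ j ∈ Sstar (I r), maxOther (b (t0 + r + 1)) (I r) j
        ≤ ∑ j, (p t0 j + p (t0 + n) j) := by
      have step1 : ∑ r ∈ Finset.range n, ∑ j ∈ Sstar (I r), maxOther (b (t0 + r + 1)) (I r) j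
          ≤ ∑ r ∈ Finset.range n, ∑ j ∈ Sstar (I r), (p t0 j + p (t0 + n) j) := by
        refine Finset.sum_le_sum fun r hr => Finset.sum_le_sum fun j _ =>
          hamo r (Finset.mem_range.1 hr) j
      have step2 : ∑ r ∈ Finset.range n, ∑ j ∈ Sstar (I r), (p t0 j + p (t0 + n) j)
          = ∑ x : Fin n, ∑ j ∈ Sstar x, (p t0 j + p (t0 + n) j) := by
        refine Finset.sum_bij (fun r _ => I r) (fun r _ => Finset.mem_univ _)
          hIinj (fun x _ => ?_) (fun r _ => rfl)
        obtain ⟨r, hr, he⟩ := hIsurj x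
        exact ⟨r, hr, he⟩
      rw [step2, aux_part Sstar (fun j => (hSstar j).choose) hws hwsu
        (fun _ j => p t0 j + p (t0 + n) j)] at step1
      exact step1
    -- reindex OPT
    have hOPTre : OPT = ∑ r ∈ Finset.range n, v (I r) (Sstar (I r)) := by
      rw [hOPTdef]
      refine (Finset.sum_bij (fun r _ => I r) (fun r _ => Finset.mem_univ _)
        hIinj (fun x _ => ?_) (fun r _ => rfl)).symm
      obtain ⟨r, hr, he⟩ := hIsurj x
      exact ⟨r, hr, he⟩
    -- combine
    have hcomb : ∀ r ∈ Finset.range n, α * v (I r) (Sstar (I r))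
        ≤ (∑ j ∈ T (t0 + r + 1) (I r),
            (b (t0 + r + 1) (I r) j - maxOther (b (t0 + r + 1)) (I r) j))
          + α * ∑ j ∈ Sstar (I r), maxOther (b (t0 + r + 1)) (I r) j := by
      intro r hr
      have h := haggr (t0 + r) (Sstar (I r))
      simp only [] at h
      nlinarith [h]
    have hsum1 : α * OPT ≤ (∑ j, p (t0 + n) j) + α * ∑ j, (p t0 j + p (t0 + n) j) := by
      rw [hOPTre, Finset.mul_sum]
      calc ∑ r ∈ Finset.range n, α * v (I r) (Sstar (I r))
          ≤ ∑ r ∈ Finset.range n, ((∑ j ∈ T (t0 + r + 1) (I r),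
              (b (t0 + r + 1) (I r) j - maxOther (b (t0 + r + 1)) (I r) j))
            + α * ∑ j ∈ Sstar (I r), maxOther (b (t0 + r + 1)) (I r) j) :=
            Finset.sum_le_sum hcomb
        _ = (∑ r ∈ Finset.range n, ∑ j ∈ T (t0 + r + 1) (I r),
              (b (t0 + r + 1) (I r) j - maxOther (b (t0 + r + 1)) (I r) j))
            + α * ∑ r ∈ Finset.range n, ∑ j ∈ Sstar (I r), maxOther (b (t0 + r + 1)) (I r) j := by
            rw [Finset.sum_add_distrib, Finset.mul_sum]
        _ ≤ (∑ j, p (t0 + n) j) + α * ∑ j, (p t0 j + p (t0 + n) j) := by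
            have := hb
            have := ha
            nlinarith [ha, hb]
    rw [hDWp, hDWp]
    rw [Finset.sum_add_distrib] at hsum1
    nlinarith [hsum1]
  -- final assembly
  set A : ℝ := ∑ t ∈ Finset.Icc 1 Tfin, SW t with hAdef
  have hA0 : 0 ≤ A := Finset.sum_nonneg fun t _ => hSW0 t
  have hsub1 : ∀ s : Finset ℕ, s ⊆ Finset.Icc 1 Tfin → ∑ t ∈ s, SW t ≤ A :=
    fun s hs => Finset.sum_le_sum_of_subset_of_nonneg hs (fun t _ _ => hSW0 t)
  have hcore : α * ((Tfin : ℝ) - n) * OPT ≤ (2 * α + 1) * β * A := by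
    rcases le_or_gt n Tfin with hTn | hTn
    · have hper : ∀ t0 ∈ Finset.Icc 1 (Tfin - n),
          α * OPT ≤ (α + 1) * (β * SW (t0 + n)) + α * (β * SW t0) := by
        intro t0 _
        have h1 := key t0
        have h5 : (α + 1) * DW (t0 + n) ≤ (α + 1) * (β * SW (t0 + n)) :=
          mul_le_mul_of_nonneg_left (hDWSW (t0 + n)) (by linarith)
        have h6 : α * DW t0 ≤ α * (β * SW t0) :=
          mul_le_mul_of_nonneg_left (hDWSW t0) hα.le
        linarith
      have hcard := Finset.card_nsmul_le_sum (Finset.Icc 1 (Tfin - n)) _ _ hper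
      rw [Nat.card_Icc, nsmul_eq_mul] at hcard
      have hcast : ((Tfin - n + 1 - 1 : ℕ) : ℝ) = (Tfin : ℝ) - n := by
        have h7 : (Tfin - n + 1 - 1 : ℕ) = Tfin - n := by omega
        rw [h7, Nat.cast_sub hTn]
      rw [hcast] at hcard
      have hshift : ∑ t0 ∈ Finset.Icc 1 (Tfin - n), SW (t0 + n)
          = ∑ t ∈ Finset.Icc (1 + n) Tfin, SW t := by
        refine Finset.sum_nbij' (fun t0 => t0 + n) (fun t => t - n) ?_ ?_ ?_ ?_
          (fun a ha => rfl)
        · intro a ha; simp only [Finset.mem_Icc] at *; omega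
        · intro a ha; simp only [Finset.mem_Icc] at *; omega
        · intro a ha; simp only [Finset.mem_Icc] at *; omega
        · intro a ha; simp only [Finset.mem_Icc] at *; omega
      have hsum_add : ∑ t0 ∈ Finset.Icc 1 (Tfin - n),
            ((α + 1) * (β * SW (t0 + n)) + α * (β * SW t0))
          = (α + 1) * β * (∑ t0 ∈ Finset.Icc 1 (Tfin - n), SW (t0 + n))
            + α * β * (∑ t0 ∈ Finset.Icc 1 (Tfin - n), SW t0) := by
        rw [Finset.sum_add_distrib, Finset.mul_sum, Finset.mul_sum]
        simp only [mul_assoc]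
      have hle1 : ∑ t0 ∈ Finset.Icc 1 (Tfin - n), SW (t0 + n) ≤ A := by
        rw [hshift]; exact hsub1 _ (Finset.Icc_subset_Icc (by omega) le_rfl)
      have hle2 : ∑ t0 ∈ Finset.Icc 1 (Tfin - n), SW t0 ≤ A :=
        hsub1 _ (Finset.Icc_subset_Icc le_rfl (by omega))
      rw [hsum_add] at hcard
      have e5 : (α + 1) * β * (∑ t0 ∈ Finset.Icc 1 (Tfin - n), SW (t0 + n))
          ≤ (α + 1) * β * A :=
        mul_le_mul_of_nonneg_left hle1 (mul_nonneg (by linarith) (by linarith))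
      have e6 : α * β * (∑ t0 ∈ Finset.Icc 1 (Tfin - n), SW t0) ≤ α * β * A :=
        mul_le_mul_of_nonneg_left hle2 (mul_nonneg (by linarith) (by linarith))
      nlinarith [hcard, e5, e6]
    · have hTle : (Tfin : ℝ) ≤ n := by exact_mod_cast hTn.le
      have h1 : α * ((Tfin : ℝ) - n) * OPT ≤ 0 := by
        nlinarith [mul_nonneg (mul_nonneg hα.le hOPT0) (by linarith : (0:ℝ) ≤ (n : ℝ) - Tfin)]
      have h2 : (0 : ℝ) ≤ (2 * α + 1) * β * A :=
        mul_nonneg (mul_nonneg (by linarith) (by linarith)) hA0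
      linarith
  have hT : (0 : ℝ) < Tfin := by exact_mod_cast hTfin
  have hc : (0 : ℝ) < (2 * α + 1) * β := mul_pos (by linarith) (by linarith)
  have hc1 : (2 * α + 1 : ℝ) ≠ 0 := by linarith
  have hc2 : (β : ℝ) ≠ 0 := by linarith
  have hc3 : ((Tfin : ℝ)) ≠ 0 := ne_of_gt hT
  have lhs_eq : α / ((2 * α + 1) * β) * (1 - (n : ℝ) / Tfin) * OPT
      = (α * ((Tfin : ℝ) - n) * OPT) * ((2 * α + 1) * β * Tfin)⁻¹ := by
    field_simp
  have rhs_eq : ((2 * α + 1) * β * A) * ((2 * α + 1) * β * Tfin)⁻¹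
      = 1 / (Tfin : ℝ) * A := by
    field_simp
  show α / ((2 * α + 1) * β) * (1 - (n : ℝ) / Tfin) * OPT ≤ 1 / (Tfin : ℝ) * A
  calc α / ((2 * α + 1) * β) * (1 - (n : ℝ) / Tfin) * OPT
      = (α * ((Tfin : ℝ) - n) * OPT) * ((2 * α + 1) * β * Tfin)⁻¹ := lhs_eq
    _ ≤ ((2 * α + 1) * β * A) * ((2 * α + 1) * β * Tfin)⁻¹ :=
        mul_le_mul_of_nonneg_right hcore (inv_nonneg.2 (mul_pos hc hT).le)
    _ = 1 / (Tfin : ℝ) * A := rhs_eq
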